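/- If Z is standard Gaussian and G ∈ L^2(γ) with G_∞(y) := E[G(Z + y)] smooth near 0, then the power rank inf{m ≥ 1 : G_∞^{(m)}(0) ≠ 0} coincides with the Hermite rank inf{m ≥ 1 : E[G(Z)H_m(Z)] ≠ 0}; indeed G_∞^{(m)}(0) = E[G(Z) H_m(Z)] for all m ≥ 1. -/

import Mathlib

open MeasureTheory ProbabilityTheory

/-- The Hermite polynomials `H_m(x) = (-1)^m e^{x²/2} dᵐ/dxᵐ e^{-x²/2}`. -/
noncomputable def hermiteFn (m : ℕ) (x : ℝ) : ℝ :=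
  (-1 : ℝ) ^ m * Real.exp (x ^ 2 / 2) * iteratedDeriv m (fun y => Real.exp (-y ^ 2 / 2)) x

/-- The Hermite rank of `G`: the least `m ≥ 1` with `E[G(Z) H_m(Z)] ≠ 0`, `Z ~ N(0,1)`. -/
noncomputable def hermiteRank (G : ℝ → ℝ) : ℕ :=
  sInf {m : ℕ | 1 ≤ m ∧ ∫ x, G x * hermiteFn m x ∂(gaussianReal 0 1) ≠ 0}

section Aux

open Polynomial Real Set
open scoped NNReal ENNReal

lemma hermiteFn_eq_aeval (m : ℕ) (x : ℝ) : hermiteFn m x = aeval x (hermite m) := by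
  have h : (fun y : ℝ => Real.exp (-y ^ 2 / 2)) = fun y => Real.exp (-(y ^ 2 / 2)) := by
    funext y; rw [neg_div]
  rw [hermiteFn, h, iteratedDeriv_eq_iterate, Polynomial.deriv_gaussian_eq_hermite_mul_gaussian]
  have h1 : Real.exp (x^2/2) * Real.exp (-(x^2/2)) = 1 := by
    rw [← Real.exp_add]; simp
  have h2 : ((-1:ℝ)^m) * ((-1:ℝ)^m) = 1 := by
    rw [← pow_add]; exact Even.neg_one_pow ⟨m, rfl⟩
  calc (-1 : ℝ) ^ m * Real.exp (x ^ 2 / 2) *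
        ((-1 : ℝ) ^ m * aeval x (hermite m) * Real.exp (-(x ^ 2 / 2)))
      = ((-1:ℝ)^m * (-1:ℝ)^m) * (Real.exp (x^2/2) * Real.exp (-(x^2/2))) * aeval x (hermite m) := by
        ring
    _ = aeval x (hermite m) := by rw [h1, h2]; ring

lemma integral_gaussian_eq_volume (f : ℝ → ℝ) :
    ∫ x, f x ∂(gaussianReal 0 1) = ∫ x, gaussianPDFReal 0 1 x * f x := by
  rw [gaussianReal_of_var_ne_zero _ one_ne_zero]
  have hd : (gaussianPDF 0 1) = fun x => ((Real.toNNReal (gaussianPDFReal 0 1 x) : ℝ≥0) : ℝ≥0∞) := by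
    funext x; rfl
  rw [hd, integral_withDensity_eq_integral_smul
    ((measurable_gaussianPDFReal 0 1).real_toNNReal) f]
  congr 1; funext x
  rw [NNReal.smul_def, smul_eq_mul, Real.coe_toNNReal _ (gaussianPDFReal_nonneg 0 1 x)]

lemma pdf_shift (x y : ℝ) :
    gaussianPDFReal 0 1 (x - y) = gaussianPDFReal 0 1 x * Real.exp (x*y - y^2/2) := by
  simp only [gaussianPDFReal, NNReal.coe_one, mul_one, sub_zero]
  rw [mul_assoc, ← Real.exp_add]
  congr 1
  ring

lemma Ginf_integral_eq (G : ℝ → ℝ) (y : ℝ) :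
    ∫ x, G (x + y) ∂(gaussianReal 0 1)
      = ∫ x, G x * Real.exp (x*y - y^2/2) ∂(gaussianReal 0 1) := by
  rw [integral_gaussian_eq_volume, integral_gaussian_eq_volume]
  have := integral_add_right_eq_self (μ := volume)
    (fun x => gaussianPDFReal 0 1 (x - y) * G x) y
  simp only [add_sub_cancel_right] at this
  rw [this]
  congr 1; funext x
  rw [pdf_shift]
  ring

/-- The kernel appearing when repeatedly differentiating `y ↦ ∫ G x · e^{xy - y²/2}`. -/
noncomputable def Kker (m : ℕ) (y x : ℝ) : ℝ :=
  aeval (x - y) (hermite m) * Real.exp (x*y - y^2/2)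

lemma Kker_hasDerivAt (m : ℕ) (x y : ℝ) :
    HasDerivAt (fun y => Kker m y x) (Kker (m+1) y x) y := by
  have h1 : HasDerivAt (fun y : ℝ => aeval (x - y) (hermite m))
      (-(aeval (x - y) (derivative (hermite m)))) y := by
    have hs : HasDerivAt (fun y : ℝ => x - y) (-1) y := by
      simpa using (hasDerivAt_id y).const_sub x
    have := (Polynomial.hasDerivAt_aeval (q := hermite m) (x - y)).comp y hs
    simpa [mul_comm, Function.comp_def] using this
  have h2 : HasDerivAt (fun y : ℝ => Real.exp (x*y - y^2/2))
      ((x - y) * Real.exp (x*y - y^2/2)) y := by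
    have hs : HasDerivAt (fun y : ℝ => x*y - y^2/2) (x - y) y := by
      have h3 : HasDerivAt (fun y : ℝ => x*y) x y := by
        simpa using (hasDerivAt_id y).const_mul x
      have h4 : HasDerivAt (fun y : ℝ => y^2/2) y y := by
        have := ((hasDerivAt_id y).pow 2).div_const 2
        simpa using this
      exact h3.sub h4
    simpa [mul_comm] using hs.exp
  have : HasDerivAt (fun y => Kker m y x) _ y := h1.mul h2
  convert this using 1
  simp only [Kker, hermite_succ, map_sub, map_mul, aeval_X]
  ring

lemma Kker_continuous (m : ℕ) (y : ℝ) : Continuous fun x => Kker m y x := by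
  unfold Kker
  exact ((hermite m).continuous_aeval.comp (continuous_id.sub continuous_const)).mul
    ((continuous_id.mul continuous_const).sub continuous_const).rexp

lemma eval_poly_bound (q : ℝ[X]) : ∃ C : ℝ, 0 ≤ C ∧ ∀ t x : ℝ, |t| ≤ 1 + |x| →
    |q.eval t| ≤ C * (1+|x|)^q.natDegree := by
  refine ⟨∑ i ∈ Finset.range (q.natDegree + 1), |q.coeff i|,
    Finset.sum_nonneg fun i _ => abs_nonneg _, fun t x ht => ?_⟩
  rw [Polynomial.eval_eq_sum_range, Finset.sum_mul]
  refine (Finset.abs_sum_le_sum_abs _ _).trans (Finset.sum_le_sum fun i hi => ?_)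
  rw [abs_mul, abs_pow]
  have h2 : |t|^i ≤ (1+|x|)^q.natDegree := by
    calc |t|^i ≤ (1+|x|)^i := pow_le_pow_left₀ (abs_nonneg t) ht i
      _ ≤ (1+|x|)^q.natDegree := by
          apply pow_le_pow_right₀ (by simp [abs_nonneg])
            (Nat.lt_succ_iff.mp (Finset.mem_range.mp hi))
  exact mul_le_mul_of_nonneg_left h2 (abs_nonneg _)

lemma Kker_bound (m : ℕ) : ∃ C t : ℝ, 0 ≤ C ∧ 0 ≤ t ∧ ∀ x y : ℝ, |y| ≤ 1 →
    |Kker m y x| ≤ C * Real.exp (t * |x|) := by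
  set q : ℝ[X] := (hermite m).map (algebraMap ℤ ℝ) with hq
  obtain ⟨C, hC, hbd⟩ := eval_poly_bound q
  refine ⟨C, q.natDegree + 1, hC, by positivity, fun x y hy => ?_⟩
  have haeval : (aeval (x - y) (hermite m) : ℝ) = q.eval (x - y) := by
    rw [hq, Polynomial.eval_map, aeval_def]
  have h1 : |aeval (x - y) (hermite m)| ≤ C * (1+|x|)^q.natDegree := by
    rw [haeval]
    apply hbd
    calc |x - y| ≤ |x| + |y| := abs_sub _ _
      _ ≤ 1 + |x| := by linarith
  have h2 : Real.exp (x*y - y^2/2) ≤ Real.exp |x| := by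
    apply Real.exp_le_exp.mpr
    have : x*y ≤ |x| := by
      calc x*y ≤ |x*y| := le_abs_self _
        _ = |x| * |y| := abs_mul _ _
        _ ≤ |x| * 1 := mul_le_mul_of_nonneg_left hy (abs_nonneg x)
        _ = |x| := mul_one _
    nlinarith [sq_nonneg y]
  have h3 : (1+|x|)^q.natDegree ≤ Real.exp (q.natDegree * |x|) := by
    calc (1+|x|)^q.natDegree ≤ (Real.exp |x|)^q.natDegree := by
          apply pow_le_pow_left₀ (by positivity)
          linarith [Real.add_one_le_exp |x|]
      _ = Real.exp (q.natDegree * |x|) := by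
          rw [← Real.exp_nat_mul]
  calc |Kker m y x| = |aeval (x - y) (hermite m)| * Real.exp (x*y - y^2/2) := by
        rw [Kker, abs_mul, abs_of_pos (Real.exp_pos _)]
    _ ≤ (C * (1+|x|)^q.natDegree) * Real.exp |x| := by
        apply mul_le_mul h1 h2 (le_of_lt (Real.exp_pos _)) (by positivity)
    _ ≤ (C * Real.exp (q.natDegree * |x|)) * Real.exp |x| := by
        apply mul_le_mul_of_nonneg_right _ (le_of_lt (Real.exp_pos _))
        · exact mul_le_mul_of_nonneg_left h3 hC
    _ = C * Real.exp ((q.natDegree + 1) * |x|) := by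
        rw [mul_assoc, ← Real.exp_add]; ring_nf

lemma integrable_exp_mul_pdf (s : ℝ) :
    Integrable (fun x => Real.exp (s*x) * gaussianPDFReal 0 1 x) := by
  have h1 : Integrable (fun x : ℝ => Real.exp (-(1/2) * x^2)) :=
    integrable_exp_neg_mul_sq (by norm_num)
  have h2 : Integrable (fun x : ℝ => Real.exp (-(1/2) * (x - s)^2)) :=
    h1.comp_sub_right s
  have h3 := (h2.const_mul ((√(2 * π))⁻¹ * Real.exp (s^2/2)))
  apply h3.congr
  filter_upwards with x
  have key : ∀ a b : ℝ, rexp a * ((√(2*π))⁻¹ * rexp b) = (√(2*π))⁻¹ * rexp (a+b) := by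
    intro a b; rw [Real.exp_add]; ring
  simp only [gaussianPDFReal, NNReal.coe_one, mul_one, sub_zero]
  rw [mul_comm ((√(2 * π))⁻¹ * Real.exp (s^2/2)), key, key]
  congr 2
  ring

lemma memℒ2_exp_abs (t : ℝ) (ht : 0 ≤ t) :
    MemLp (fun x => Real.exp (t * |x|)) 2 (gaussianReal 0 1) := by
  have hcont : Continuous fun x : ℝ => Real.exp (t * |x|) :=
    (continuous_const.mul continuous_abs).rexp
  rw [memLp_two_iff_integrable_sq hcont.aestronglyMeasurable]
  have hsq : (fun x : ℝ => (Real.exp (t * |x|))^2) = fun x => Real.exp (2*t * |x|) := by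
    funext x; rw [← Real.exp_nat_mul]; ring_nf
  rw [hsq, gaussianReal_of_var_ne_zero _ one_ne_zero]
  rw [integrable_withDensity_iff (measurable_gaussianPDF 0 1)
    (Filter.Eventually.of_forall fun x => ENNReal.ofReal_lt_top)]
  have hInt : Integrable
      (fun x => (Real.exp (2*t*x) + Real.exp (-(2*t)*x)) * gaussianPDFReal 0 1 x) := by
    have := (integrable_exp_mul_pdf (2*t)).add (integrable_exp_mul_pdf (-(2*t)))
    apply this.congr
    filter_upwards with x
    simp only [Pi.add_apply]
    ring
  apply hInt.mono'
  · exact ((continuous_const.mul continuous_abs).rexp.measurable.mul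
      (measurable_gaussianPDF 0 1).ennreal_toReal).aestronglyMeasurable
  · filter_upwards with x
    have hpdf := gaussianPDFReal_nonneg 0 1 x
    have htoReal : (ENNReal.ofReal (gaussianPDFReal 0 1 x)).toReal = gaussianPDFReal 0 1 x :=
      ENNReal.toReal_ofReal hpdf
    rw [gaussianPDF, htoReal, Real.norm_eq_abs, abs_mul, abs_of_nonneg hpdf,
      abs_of_pos (Real.exp_pos _)]
    apply mul_le_mul_of_nonneg_right _ hpdf
    rcases le_or_gt 0 x with hx | hx
    · rw [abs_of_nonneg hx]
      nlinarith [Real.exp_pos (-(2*t)*x), le_refl (Real.exp (2*t*x))]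
    · rw [abs_of_neg hx]
      have : 2*t*(-x) = -(2*t)*x := by ring
      rw [this]
      nlinarith [Real.exp_pos (2*t*x)]

lemma aesm_GK (G : ℝ → ℝ) (hGm : AEStronglyMeasurable G (gaussianReal 0 1)) (m : ℕ) (y : ℝ) :
    AEStronglyMeasurable (fun x => G x * Kker m y x) (gaussianReal 0 1) :=
  hGm.mul (Kker_continuous m y).aestronglyMeasurable

lemma bound_GK {G : ℝ → ℝ} (hG : MemLp G 2 (gaussianReal 0 1)) {C t : ℝ} (hC : 0 ≤ C)
    (ht : 0 ≤ t) :
    Integrable (fun x => G x ^ 2 + (C * Real.exp (t * |x|))^2) (gaussianReal 0 1) :=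
  hG.integrable_sq.add ((memℒ2_exp_abs t ht).const_mul C).integrable_sq

lemma abs_mul_le_sq_add_sq (a b c : ℝ) (hb : 0 ≤ c) (h : |b| ≤ c) : ‖a * b‖ ≤ a^2 + c^2 := by
  rw [Real.norm_eq_abs, abs_mul]
  nlinarith [sq_nonneg (|a| - c), abs_nonneg a, sq_abs a, abs_nonneg b]

lemma integrable_GK {G : ℝ → ℝ} (hG : MemLp G 2 (gaussianReal 0 1)) (m : ℕ) {y : ℝ}
    (hy : |y| ≤ 1) : Integrable (fun x => G x * Kker m y x) (gaussianReal 0 1) := by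
  obtain ⟨C, t, hC, ht, hbd⟩ := Kker_bound m
  apply (bound_GK hG hC ht).mono' (aesm_GK G hG.aestronglyMeasurable m y)
  filter_upwards with x
  exact abs_mul_le_sq_add_sq _ _ _ (by positivity) (hbd x y hy)

end Aux

section Main

open Polynomial Real Set
open scoped NNReal ENNReal

variable {G : ℝ → ℝ}

lemma F_hasDerivAt (hG : MemLp G 2 (gaussianReal 0 1)) (m : ℕ) {y : ℝ} (hy : |y| < 1) :
    HasDerivAt (fun y => ∫ x, G x * Kker m y x ∂(gaussianReal 0 1))
      (∫ x, G x * Kker (m+1) y x ∂(gaussianReal 0 1)) y := by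
  obtain ⟨C, t, hC, ht, hbd⟩ := Kker_bound (m+1)
  have hε : (0:ℝ) < 1 - |y| := by linarith
  refine (hasDerivAt_integral_of_dominated_loc_of_deriv_le
    (F' := fun y' x => G x * Kker (m+1) y' x) (Metric.ball_mem_nhds y hε)
    (Filter.Eventually.of_forall fun y' => aesm_GK G hG.aestronglyMeasurable m y')
    (integrable_GK hG m hy.le)
    (aesm_GK G hG.aestronglyMeasurable (m+1) y)
    ?_ (bound_GK hG hC ht) ?_).2
  · filter_upwards with x y' hy'
    have hy1 : |y'| ≤ 1 := by
      have h0 := mem_ball_iff_norm.mp hy'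
      rw [Real.norm_eq_abs] at h0
      have h1 : |y'| ≤ |y' - y| + |y| := by
        calc |y'| = |y' - y + y| := by ring_nf
          _ ≤ |y' - y| + |y| := abs_add_le _ _
      linarith
    exact abs_mul_le_sq_add_sq _ _ _ (by positivity) (hbd x y' hy1)
  · filter_upwards with x y' _
    exact (Kker_hasDerivAt m x y').const_mul (G x)

lemma iteratedDeriv_Ginf_eq (hG : MemLp G 2 (gaussianReal 0 1))
    (Ginf : ℝ → ℝ) (hGinf : ∀ y : ℝ, Ginf y = ∫ x, G (x + y) ∂(gaussianReal 0 1)) :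
    ∀ m : ℕ, ∀ y : ℝ, |y| < 1 →
      iteratedDeriv m Ginf y = ∫ x, G x * Kker m y x ∂(gaussianReal 0 1) := by
  intro m
  induction m with
  | zero =>
    intro y _
    rw [iteratedDeriv_zero, hGinf, Ginf_integral_eq]
    congr 1; funext x
    simp [Kker, hermite_zero]
  | succ m ih =>
    intro y hy
    have hopen : IsOpen {z : ℝ | |z| < 1} := isOpen_lt (continuous_abs) continuous_const
    have hmem : {z : ℝ | |z| < 1} ∈ nhds y := hopen.mem_nhds hy
    have hev : iteratedDeriv m Ginf =ᶠ[nhds y]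
        fun z => ∫ x, G x * Kker m z x ∂(gaussianReal 0 1) := by
      filter_upwards [hmem] with z hz
      exact ih z hz
    rw [iteratedDeriv_succ, hev.deriv_eq, (F_hasDerivAt hG m hy).deriv]

end Main

/-- For `G ∈ L²(γ)` with `G_∞(y) = E[G(Z + y)]` smooth near `0`, the derivatives satisfy
`G_∞⁽ᵐ⁾(0) = E[G(Z) H_m(Z)]` for all `m ≥ 1`; hence the power rank
`inf{m ≥ 1 : G_∞⁽ᵐ⁾(0) ≠ 0}` coincides with the Hermite rank. -/
theorem power_rank_eq_hermite_rank (G : ℝ → ℝ) (hG : MemLp G 2 (gaussianReal 0 1))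
    (Ginf : ℝ → ℝ) (hGinf : ∀ y : ℝ, Ginf y = ∫ x, G (x + y) ∂(gaussianReal 0 1))
    (hsmooth : ContDiffAt ℝ (⊤ : ℕ∞) Ginf 0) :
    (∀ m : ℕ, 1 ≤ m →
      iteratedDeriv m Ginf 0 = ∫ x, G x * hermiteFn m x ∂(gaussianReal 0 1)) ∧
    sInf {m : ℕ | 1 ≤ m ∧ iteratedDeriv m Ginf 0 ≠ 0} = hermiteRank G := by
  have key : ∀ m : ℕ,
      iteratedDeriv m Ginf 0 = ∫ x, G x * hermiteFn m x ∂(gaussianReal 0 1) := by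
    intro m
    rw [iteratedDeriv_Ginf_eq hG Ginf hGinf m 0 (by norm_num)]
    congr 1; funext x
    rw [hermiteFn_eq_aeval, Kker]
    norm_num
  refine ⟨fun m _ => key m, ?_⟩
  rw [hermiteRank]
  congr 1
  ext m
  simp only [Set.mem_setOf_eq]
  exact and_congr_right fun _ => by rw [key m]
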